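/- Let A be a finite-dimensional algebra over a field k and U an indecomposable finite-dimensional A-module. If in the decomposition soc U = ⊕ᵢ Sᵢ into simple modules all the Sᵢ are pairwise non-isomorphic, and no Sᵢ appears as a composition factor of U / soc U, then U is a brick, i.e., every nonzero endomorphism of U is an isomorphism (equivalently, End_A(U) is a division ring, here End_A(U) ≅ k since k is algebraically closed). -/

import Mathlib

universe u

/-- A module is indecomposable: it is nonzero and admits no nontrivial direct sum
decomposition. -/
def IsIndecModule (A : Type u) [Ring A] (M : Type u) [AddCommGroup M] [Module A M] : Prop :=
  (∃ m : M, m ≠ 0) ∧ ∀ N P : Submodule A M, IsCompl N P → N = ⊥ ∨ N = ⊤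

/-- The socle of a module: the sum of all simple submodules. -/
def Msocle (A : Type u) [Ring A] (M : Type u) [AddCommGroup M] [Module A M] : Submodule A M :=
  sSup {S : Submodule A M | IsSimpleModule A S}

/-!
By Fitting's lemma an endomorphism `f` of the indecomposable module `U` of finite length is
bijective or nilpotent. A simple submodule not killed by `f` maps isomorphically onto a simple
submodule, which by multiplicity-freeness of the socle is itself; iterating, a nilpotent `f`
kills every simple submodule, hence the socle, and so factors through `U / soc U`. If `f ≠ 0`,
a simple submodule `T` of its image is isomorphic to `f⁻¹ T / ker f`, a composition factor of
`U / soc U`, which the hypothesis excludes.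
-/

open LinearMap Submodule

section CovBy

variable {α : Type*} [PartialOrder α] [WellFoundedLT α] [WellFoundedGT α]

theorem exists_covBy_relSeries_of_le {x y : α} (h : x ≤ y) :
    ∃ s : RelSeries {(a, b) : α × α | a ⋖ b}, s.head = x ∧ s.last = y := by
  obtain ⟨a, ha0, n, han, hcov⟩ := exists_covBy_seq_of_wellFoundedLT_wellFoundedGT_of_le h
  exact ⟨⟨n, fun i => a i, fun i => hcov i i.2⟩, ha0, han⟩

theorem exists_covBy_relSeries_through [BoundedOrder α] {x y : α} (h : x ⋖ y) :
    ∃ s : RelSeries {(a, b) : α × α | a ⋖ b}, s.head = ⊥ ∧ s.last = ⊤ ∧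
      ∃ i : Fin s.length, s i.castSucc = x ∧ s i.succ = y := by
  obtain ⟨p, hp0, hp1⟩ := exists_covBy_relSeries_of_le (bot_le : ⊥ ≤ x)
  obtain ⟨q, hq0, hq1⟩ := exists_covBy_relSeries_of_le (le_top : y ≤ ⊤)
  have connect : p.last ⋖ q.head := hp1 ▸ hq0 ▸ h
  refine ⟨p.append q connect, by simp [hp0], by simp [hq1], ⟨p.length, by simp⟩, ?_, ?_⟩
  · exact (RelSeries.append_apply_left p q connect (Fin.last p.length)).trans hp1
  · exact (RelSeries.append_apply_right p q connect 0).trans hq0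

end CovBy

/-- Fitting's lemma. -/
theorem IsIndecModule.bijective_or_isNilpotent {A M : Type u} [Ring A] [AddCommGroup M]
    [Module A M] [IsNoetherian A M] [IsArtinian A M] (hM : IsIndecModule A M)
    (f : Module.End A M) : Function.Bijective f ∨ IsNilpotent f := by
  obtain ⟨n, hn⟩ := Filter.eventually_atTop.mp f.eventually_isCompl_ker_pow_range_pow
  -- a positive exponent, so that `ker (f ^ (n + 1)) = ⊥` says something about `f`
  rcases hM.2 _ _ (hn (n + 1) n.le_succ) with hker | hker
  · left
    have hinj : Function.Injective (f ^ n * f) := by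
      rw [← pow_succ, ← LinearMap.ker_eq_bot, hker]
    rw [Module.End.coe_mul] at hinj
    exact IsArtinian.bijective_of_injective_endomorphism f hinj.of_comp
  · exact Or.inr ⟨n + 1, LinearMap.ker_eq_top.mp hker⟩

section Modules

variable {A M N : Type*} [Ring A] [AddCommGroup M] [Module A M] [AddCommGroup N] [Module A N]

theorem Submodule.nonempty_equiv_map_of_not_le_ker {S : Submodule A M} [IsSimpleModule A S]
    {f : M →ₗ[A] N} (h : ¬S ≤ ker f) : Nonempty (S ≃ₗ[A] S.map f) := by
  rcases (f.comp S.subtype).injective_or_eq_zero with hinj | hzero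
  · exact ⟨(LinearEquiv.ofInjective _ hinj).trans
      (LinearEquiv.ofEq _ _ (by rw [range_comp, range_subtype]))⟩
  · exact absurd (fun x hx => congr($hzero ⟨x, hx⟩)) h

theorem le_ker_of_isNilpotent_of_isSimpleModule
    (hmf : ∀ S₁ S₂ : Submodule A M, IsSimpleModule A S₁ → IsSimpleModule A S₂ → S₁ ≠ S₂ →
      IsEmpty (S₁ ≃ₗ[A] S₂))
    {f : Module.End A M} (hf : IsNilpotent f) {S : Submodule A M} (hS : IsSimpleModule A S) :
    S ≤ ker f := by
  by_contra hSf
  obtain ⟨e⟩ := S.nonempty_equiv_map_of_not_le_ker hSf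
  have hfS : S.map f = S := by
    by_contra hne
    exact (hmf _ _ (IsSimpleModule.congr e.symm) hS hne).false e.symm
  have hpow : ∀ j : ℕ, S.map (f ^ j) = S := by
    intro j
    induction j with
    | zero => rw [pow_zero, Module.End.one_eq_id, map_id]
    | succ j ih => rw [pow_succ, Module.End.mul_eq_comp, map_comp, hfS, ih]
  obtain ⟨m, hm⟩ := hf
  have := hpow m
  rw [hm, Submodule.map_zero] at this
  exact (isSimpleModule_iff_isAtom.mp hS).1 this.symm

noncomputable def Submodule.quotKerEquivOfLeRange (g : M →ₗ[A] N) {T : Submodule A N}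
    (hT : T ≤ range g) :
    (T.comap g ⧸ (ker g).comap (T.comap g).subtype) ≃ₗ[A] T :=
  let g' : T.comap g →ₗ[A] T := (g.comp (T.comap g).subtype).codRestrict T fun x => x.2
  have hsurj : Function.Surjective g' := fun t => by
    obtain ⟨x, hx⟩ := hT t.2
    exact ⟨⟨x, show g x ∈ T from hx ▸ t.2⟩, Subtype.ext hx⟩
  have hker : ker g' = (ker g).comap (T.comap g).subtype := by
    ext x
    exact Subtype.ext_iff
  (quotEquivOfEq _ _ hker.symm).trans (g'.quotKerEquivOfSurjective hsurj)

theorem exists_compositionSeries_factor_equiv_of_le_range [IsNoetherian A M] [IsArtinian A M]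
    (g : M →ₗ[A] N) {T : Submodule A N} [IsSimpleModule A T] (hT : T ≤ range g) :
    ∃ s : CompositionSeries (Submodule A M), s.head = ⊥ ∧ s.last = ⊤ ∧ ∃ i : Fin s.length,
      Nonempty ((s i.succ ⧸ (s i.castSucc).comap (s i.succ).subtype) ≃ₗ[A] T) := by
  let e := quotKerEquivOfLeRange g hT
  have hcov : ker g ⋖ T.comap g := by
    have : IsSimpleModule A _ := IsSimpleModule.congr e
    exact (covBy_iff_quot_is_simple fun x hx => by simp [mem_ker.mp hx]).mpr this
  obtain ⟨s, hs0, hs1, i, hi, hi'⟩ := exists_covBy_relSeries_through hcov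
  exact ⟨s, hs0, hs1, i, by rw [hi, hi']; exact ⟨e⟩⟩

end Modules

theorem stmt0_general (k A U : Type u) [Field k] [Ring A] [Algebra k A]
    [AddCommGroup U] [Module k U] [Module A U] [IsScalarTower k A U]
    [FiniteDimensional k U]
    (hind : IsIndecModule A U)
    (hmf : ∀ S₁ S₂ : Submodule A U, IsSimpleModule A S₁ → IsSimpleModule A S₂ → S₁ ≠ S₂ →
      IsEmpty (S₁ ≃ₗ[A] S₂))
    (hnocf : ∀ S : Submodule A U, IsSimpleModule A S →
      ∀ s : CompositionSeries (Submodule A (U ⧸ Msocle A U)), s.head = ⊥ → s.last = ⊤ →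
        ∀ i : Fin s.length,
          IsEmpty ((↥(s i.succ) ⧸ Submodule.comap (s i.succ).subtype (s i.castSucc)) ≃ₗ[A] S)) :
    ∀ f : U →ₗ[A] U, f ≠ 0 → Function.Bijective f := by
  have : IsNoetherian A U := isNoetherian_of_tower k inferInstance
  have : IsArtinian A U := isArtinian_of_tower k inferInstance
  intro f hf
  refine (hind.bijective_or_isNilpotent f).resolve_right fun hnil => ?_
  have hsoc : Msocle A U ≤ ker f :=
    sSup_le fun S hS => le_ker_of_isNilpotent_of_isSimpleModule hmf hnil hS
  obtain ⟨T, hT, hTle⟩ :=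
    (eq_bot_or_exists_atom_le (range ((Msocle A U).liftQ f hsoc))).resolve_left
      (by rwa [range_liftQ, range_eq_bot])
  have := isSimpleModule_iff_isAtom.mpr hT
  obtain ⟨s, hs0, hs1, i, ⟨e⟩⟩ := exists_compositionSeries_factor_equiv_of_le_range _ hTle
  exact (hnocf T this s hs0 hs1 i).false e

/-- If the socle of an indecomposable module `U` is multiplicity-free (all simple summands
pairwise non-isomorphic) and none of its simple submodules occurs as a composition factor
of `U / soc U`, then `U` is a brick: every nonzero endomorphism is an isomorphism. -/
theorem stmt0 (k A U : Type u) [Field k] [IsAlgClosed k] [Ring A] [Algebra k A]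
    [FiniteDimensional k A] [AddCommGroup U] [Module k U] [Module A U] [IsScalarTower k A U]
    [FiniteDimensional k U]
    (hind : IsIndecModule A U)
    (hmf : ∀ S₁ S₂ : Submodule A U, IsSimpleModule A S₁ → IsSimpleModule A S₂ → S₁ ≠ S₂ →
      IsEmpty (S₁ ≃ₗ[A] S₂))
    (hnocf : ∀ S : Submodule A U, IsSimpleModule A S →
      ∀ s : CompositionSeries (Submodule A (U ⧸ Msocle A U)), s.head = ⊥ → s.last = ⊤ →
        ∀ i : Fin s.length,
          IsEmpty ((↥(s i.succ) ⧸ Submodule.comap (s i.succ).subtype (s i.castSucc)) ≃ₗ[A] S)) :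
    ∀ f : U →ₗ[A] U, f ≠ 0 → Function.Bijective f :=
  stmt0_general k A U hind hmf hnocf
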